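/- arXiv:2307.08420 — 3 statements merged into one kernel-verified Lean document; each statement's English description precedes it below -/
import Mathlib

section
/- Let V be a finite type, c : V → V → ℝ≥0 a capacity function, S' ⊆ S ⊆ V nested subsets, P, Q ≥ 1 integers, and s, t distinct vertices of V with s ∉ S and t ∉ S. Assume the no-jumping condition: c u v = 0 and c v u = 0 whenever u ∉ S and v ∈ S'. Then the minimum s-t cut value of the two-level instantiation c_{P,Q} of (S, S') equals the minimum s-t cut value of the nested reweighting c' of c, where c' u v = c u v if neither endpoint is in S, c' u v = P · c u v if some endpoint is in S but no endpoint is in S', and c' u v = P · Q · c u v if some endpoint is in S'. -/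
/-!
STATEMENT 8: Under the no-jumping condition, the minimum s-t cut value of the two-level
instantiation of `(S, S')` with parameters `P, Q` equals the minimum s-t cut value of
the nested reweighting of `c`.
-/

open Finset

attribute [local instance] Classical.propDecidable

noncomputable section

/-- The value of the cut `A` for the capacity function `c`. -/
def cutValue {W : Type*} [Fintype W] (c : W → W → NNReal) (A : Finset W) : NNReal :=
  ∑ u ∈ A, ∑ v ∈ Aᶜ, c u v

/-- The minimum `s`-`t` cut value (the least value of an `s`-`t` cut). -/
def minCutValue {W : Type*} [Fintype W] (c : W → W → NNReal) (s t : W) : NNReal :=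
  sInf {x : NNReal | ∃ A : Finset W, s ∈ A ∧ t ∉ A ∧ cutValue c A = x}

/-- The capacity function of the two-level instantiation of `(S, S')` with
parameters `P` and `Q`. -/
def twoLevelCap {V : Type*} (c : V → V → NNReal) (S S' : Set V) (P Q : ℕ) :
    ({v : V // v ∉ S} ⊕ ((↥(S \ S') × Fin P) ⊕ (↥S' × (Fin P × Fin Q)))) →
    ({v : V // v ∉ S} ⊕ ((↥(S \ S') × Fin P) ⊕ (↥S' × (Fin P × Fin Q)))) → NNReal
  | Sum.inl u, Sum.inl v => c u.1 v.1
  | Sum.inl u, Sum.inr (Sum.inl (v, _)) => c u.1 v.1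
  | Sum.inr (Sum.inl (v, _)), Sum.inl u => c v.1 u.1
  | Sum.inl _, Sum.inr (Sum.inr _) => 0
  | Sum.inr (Sum.inr _), Sum.inl _ => 0
  | Sum.inr (Sum.inl (u, i)), Sum.inr (Sum.inl (v, j)) => if i = j then c u.1 v.1 else 0
  | Sum.inr (Sum.inl (u, i)), Sum.inr (Sum.inr (v, (i', _))) =>
      if i = i' then c u.1 v.1 else 0
  | Sum.inr (Sum.inr (v, (i', _))), Sum.inr (Sum.inl (u, i)) =>
      if i = i' then c v.1 u.1 else 0
  | Sum.inr (Sum.inr (u, (i, j))), Sum.inr (Sum.inr (v, (i', j'))) =>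
      if (i, j) = (i', j') then c u.1 v.1 else 0

/-- The nested reweighting of `c` with respect to `S' ⊆ S` with parameters `P, Q`. -/
def nestedReweight {V : Type*} (c : V → V → NNReal) (S S' : Set V) (P Q : ℕ) :
    V → V → NNReal := fun u v =>
  if u ∈ S' ∨ v ∈ S' then (P : NNReal) * (Q : NNReal) * c u v
  else if u ∈ S ∨ v ∈ S then (P : NNReal) * c u v
  else c u v

section aux

lemma cutValue_eq_sum {W : Type*} [Fintype W] (c : W → W → NNReal) (A : Finset W) :
    cutValue c A = ∑ u : W, ∑ v : W,
      (if u ∈ A then 1 else 0) * ((if v ∈ A then 0 else 1) * c u v) := by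
  have h2 : ∀ u, (∑ v : W, (if v ∈ A then (0:NNReal) else 1) * c u v) = ∑ v ∈ Aᶜ, c u v := by
    intro u
    simp only [ite_mul, one_mul, zero_mul]
    rw [show (∑ x : W, if x ∈ A then (0:NNReal) else c u x)
        = ∑ x : W, if x ∈ Aᶜ then c u x else 0 by
      apply Finset.sum_congr rfl; intro x _; by_cases h : x ∈ A <;> simp [h]]
    rw [Finset.sum_ite_mem, Finset.univ_inter]
  have h1 : (∑ u : W, (if u ∈ A then (1:NNReal) else 0) * (∑ v ∈ Aᶜ, c u v))
      = ∑ u ∈ A, ∑ v ∈ Aᶜ, c u v := by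
    simp only [ite_mul, one_mul, zero_mul]
    rw [Finset.sum_ite_mem, Finset.univ_inter]
  rw [cutValue, ← h1]
  exact Finset.sum_congr rfl fun u _ => by rw [← Finset.mul_sum, h2 u]

lemma sum_classes {V : Type*} [Fintype V] (S S' : Set V) (hSS : S' ⊆ S) (f : V → NNReal) :
    ∑ v : V, f v = (∑ u : {v : V // v ∉ S}, f u.1)
      + ((∑ u : ↥(S \ S'), f u.1) + ∑ u : ↥S', f u.1) := by
  have hO : ∑ x ∈ Finset.univ.filter (fun x => x ∉ S), f x = ∑ u : {v : V // v ∉ S}, f u.1 :=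
    Finset.sum_subtype _ (by simp) f
  have hM : ∑ x ∈ Finset.univ.filter (fun x => x ∈ S \ S'), f x = ∑ u : ↥(S \ S'), f u.1 :=
    Finset.sum_subtype _ (by simp) f
  have hI : ∑ x ∈ Finset.univ.filter (fun x => x ∈ S'), f x = ∑ u : ↥S', f u.1 :=
    Finset.sum_subtype _ (by simp) f
  have hsplit : ∑ x ∈ Finset.univ.filter (fun x => x ∈ S), f x
      = ∑ x ∈ Finset.univ.filter (fun x => x ∈ S \ S'), f x
        + ∑ x ∈ Finset.univ.filter (fun x => x ∈ S'), f x := by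
    rw [← Finset.sum_filter_add_sum_filter_not (Finset.univ.filter (fun x => x ∈ S))
        (fun x => x ∈ S') f, Finset.filter_filter, Finset.filter_filter]
    rw [add_comm]
    congr 1 <;> apply Finset.sum_congr _ (fun x _ => rfl) <;> ext x <;>
      simp only [Finset.mem_filter, Finset.mem_univ, true_and, Set.mem_diff]
    exact ⟨fun h => h.2, fun h => ⟨hSS h, h⟩⟩
  rw [← Finset.sum_filter_add_sum_filter_not Finset.univ (fun x => x ∈ S) f, hsplit, hO, hM, hI]
  ring

lemma sum_swap3 {M' : Type*} [AddCommMonoid M'] {α β γ : Type*} [Fintype α] [Fintype β]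
    [Fintype γ] (f : α → β → γ → M') :
    ∑ a : α, ∑ b : β, ∑ c : γ, f a b c = ∑ b : β, ∑ c : γ, ∑ a : α, f a b c := by
  rw [Finset.sum_comm]
  exact Finset.sum_congr rfl fun b _ => Finset.sum_comm

lemma sum_swap4I {M' : Type*} [AddCommMonoid M'] {α β γ δ : Type*} [Fintype α] [Fintype β]
    [Fintype γ] [Fintype δ] (f : α → β → γ → δ → M') :
    ∑ a : α, ∑ b : β, ∑ g : γ, ∑ d : δ, f a b g d
      = ∑ g : γ, ∑ a : α, ∑ b : β, ∑ d : δ, f a b g d := by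
  calc ∑ a : α, ∑ b : β, ∑ g : γ, ∑ d : δ, f a b g d
      = ∑ a : α, ∑ g : γ, ∑ b : β, ∑ d : δ, f a b g d :=
        Finset.sum_congr rfl fun a _ => Finset.sum_comm
    _ = ∑ g : γ, ∑ a : α, ∑ b : β, ∑ d : δ, f a b g d := Finset.sum_comm

lemma sum_swap4MI {M' : Type*} [AddCommMonoid M'] {α β γ δ : Type*} [Fintype α] [Fintype β]
    [Fintype γ] [Fintype δ] (f : α → β → γ → δ → M') :
    ∑ a : α, ∑ b : β, ∑ g : γ, ∑ d : δ, f a b g d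
      = ∑ g : γ, ∑ a : α, ∑ d : δ, ∑ b : β, f a b g d := by
  rw [sum_swap4I]
  exact Finset.sum_congr rfl fun g _ => Finset.sum_congr rfl fun a _ => Finset.sum_comm

def projCut {V : Type*} [Fintype V] {S S' : Set V} {P Q : ℕ}
    (B : Finset ({v : V // v ∉ S} ⊕ ((↥(S \ S') × Fin P) ⊕ (↥S' × (Fin P × Fin Q))))) (i : Fin P) (j : Fin Q) : Finset V :=
  Finset.univ.filter (fun v =>
    if h : v ∈ S then
      if h' : v ∈ S' then Sum.inr (Sum.inr (⟨v, h'⟩, (i, j))) ∈ B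
      else Sum.inr (Sum.inl (⟨v, ⟨h, h'⟩⟩, i)) ∈ B
    else Sum.inl ⟨v, h⟩ ∈ B)

def liftCut {V : Type*} [Fintype V] {S S' : Set V} {P Q : ℕ} (A : Finset V) :
    Finset ({v : V // v ∉ S} ⊕ ((↥(S \ S') × Fin P) ⊕ (↥S' × (Fin P × Fin Q)))) :=
  Finset.univ.filter (fun w => match w with
    | Sum.inl u => u.1 ∈ A
    | Sum.inr (Sum.inl (u, _)) => u.1 ∈ A
    | Sum.inr (Sum.inr (u, _)) => u.1 ∈ A)

section mem
variable {V : Type*} [Fintype V] {S S' : Set V} {P Q : ℕ}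
    (B : Finset ({v : V // v ∉ S} ⊕ ((↥(S \ S') × Fin P) ⊕ (↥S' × (Fin P × Fin Q))))) (i : Fin P) (j : Fin Q)

lemma mem_projCut_O (u : {v : V // v ∉ S}) : (↑u ∈ projCut B i j) ↔ Sum.inl u ∈ B := by
  simp [projCut, u.2]

lemma mem_projCut_M (u : ↥(S \ S')) : (↑u ∈ projCut B i j) ↔ Sum.inr (Sum.inl (u, i)) ∈ B := by
  simp [projCut, u.2.1, u.2.2]

lemma mem_projCut_I (hSS : S' ⊆ S) (u : ↥S') :
    (↑u ∈ projCut B i j) ↔ Sum.inr (Sum.inr (u, (i, j))) ∈ B := by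
  simp [projCut, hSS u.2, u.2]

lemma mem_liftCut (A : Finset V) (w : ({v : V // v ∉ S} ⊕ ((↥(S \ S') × Fin P) ⊕ (↥S' × (Fin P × Fin Q))))) :
    w ∈ (liftCut A : Finset ({v : V // v ∉ S} ⊕ ((↥(S \ S') × Fin P) ⊕ (↥S' × (Fin P × Fin Q))))) ↔ (match w with
    | Sum.inl u => u.1 ∈ A
    | Sum.inr (Sum.inl (u, _)) => u.1 ∈ A
    | Sum.inr (Sum.inr (u, _)) => u.1 ∈ A) := by
  simp [liftCut]

lemma projCut_liftCut (A : Finset V) :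
    projCut (liftCut A : Finset ({v : V // v ∉ S} ⊕ ((↥(S \ S') × Fin P) ⊕ (↥S' × (Fin P × Fin Q))))) i j = A := by
  ext v
  by_cases h : v ∈ S
  · by_cases h' : v ∈ S'
    · simp [projCut, liftCut, h, h']
    · simp [projCut, liftCut, h, h']
  · simp [projCut, liftCut, h]

end mem

section cls
variable {V : Type*} {S S' : Set V}
lemma clsO_S (u : {v : V // v ∉ S}) : (↑u ∈ S) = False := eq_false u.2
lemma clsO_S' (hSS : S' ⊆ S) (u : {v : V // v ∉ S}) : (↑u ∈ S') = False :=
  eq_false fun h => u.2 (hSS h)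
lemma clsM_S (u : ↥(S \ S')) : ((u : V) ∈ S) = True := eq_true u.2.1
lemma clsM_S' (u : ↥(S \ S')) : ((u : V) ∈ S') = False := eq_false u.2.2
lemma clsI_S' (u : ↥S') : ((u : V) ∈ S') = True := eq_true u.2
lemma clsI_S (hSS : S' ⊆ S) (u : ↥S') : ((u : V) ∈ S) = True := eq_true (hSS u.2)
end cls

set_option maxHeartbeats 4000000 in
lemma bigExpand {V : Type*} [Fintype V] (c : V → V → NNReal) (S S' : Set V) (P Q : ℕ)
    (B : Finset ({v : V // v ∉ S} ⊕ ((↥(S \ S') × Fin P) ⊕ (↥S' × (Fin P × Fin Q))))) :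
    cutValue (twoLevelCap c S S' P Q) B
    = (∑ u : {v : V // v ∉ S}, ∑ v : {v : V // v ∉ S}, (if Sum.inl u ∈ B then (1:NNReal) else 0) * ((if Sum.inl v ∈ B then (0:NNReal) else 1) * c ↑u ↑v))
    + (∑ u : {v : V // v ∉ S}, ∑ v : ↥(S \ S'), ∑ i : Fin P, (if Sum.inl u ∈ B then (1:NNReal) else 0) * ((if Sum.inr (Sum.inl (v, i)) ∈ B then (0:NNReal) else 1) * c ↑u ↑v))
    + (∑ u : ↥(S \ S'), ∑ i : Fin P, ∑ v : {v : V // v ∉ S}, (if Sum.inr (Sum.inl (u, i)) ∈ B then (1:NNReal) else 0) * ((if Sum.inl v ∈ B then (0:NNReal) else 1) * c ↑u ↑v))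
    + (∑ u : ↥(S \ S'), ∑ i : Fin P, ∑ v : ↥(S \ S'), (if Sum.inr (Sum.inl (u, i)) ∈ B then (1:NNReal) else 0) * ((if Sum.inr (Sum.inl (v, i)) ∈ B then (0:NNReal) else 1) * c ↑u ↑v))
    + (∑ u : ↥(S \ S'), ∑ i : Fin P, ∑ v : ↥S', ∑ j : Fin Q, (if Sum.inr (Sum.inl (u, i)) ∈ B then (1:NNReal) else 0) * ((if Sum.inr (Sum.inr (v, i, j)) ∈ B then (0:NNReal) else 1) * c ↑u ↑v))
    + (∑ u : ↥S', ∑ i : Fin P, ∑ j : Fin Q, ∑ v : ↥(S \ S'), (if Sum.inr (Sum.inr (u, i, j)) ∈ B then (1:NNReal) else 0) * ((if Sum.inr (Sum.inl (v, i)) ∈ B then (0:NNReal) else 1) * c ↑u ↑v))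
    + (∑ u : ↥S', ∑ i : Fin P, ∑ j : Fin Q, ∑ v : ↥S', (if Sum.inr (Sum.inr (u, i, j)) ∈ B then (1:NNReal) else 0) * ((if Sum.inr (Sum.inr (v, i, j)) ∈ B then (0:NNReal) else 1) * c ↑u ↑v)) := by
  rw [cutValue_eq_sum]
  simp only [Fintype.sum_sum_type, Fintype.sum_prod_type, twoLevelCap]
  simp only [Prod.mk.injEq, mul_ite, mul_zero, ite_and, Finset.sum_ite_irrel,
    Finset.sum_const_zero, Finset.sum_ite_eq, Finset.sum_ite_eq', Finset.mem_univ, if_true]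
  simp only [Finset.sum_add_distrib, add_zero, zero_add]
  ring

set_option maxHeartbeats 4000000 in
lemma smallExpand {V : Type*} [Fintype V] (c : V → V → NNReal) (S S' : Set V)
    (hSS : S' ⊆ S) (P Q : ℕ)
    (hnj : ∀ u v, u ∉ S → v ∈ S' → c u v = 0 ∧ c v u = 0)
    (B : Finset ({v : V // v ∉ S} ⊕ ((↥(S \ S') × Fin P) ⊕ (↥S' × (Fin P × Fin Q))))) (i : Fin P) (j : Fin Q) :
    cutValue (nestedReweight c S S' P Q) (projCut B i j)
    = (∑ u : {v : V // v ∉ S}, ∑ v : {v : V // v ∉ S}, (if Sum.inl u ∈ B then (1:NNReal) else 0) * ((if Sum.inl v ∈ B then (0:NNReal) else 1) * c ↑u ↑v))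
    + (∑ u : {v : V // v ∉ S}, ∑ v : ↥(S \ S'), (if Sum.inl u ∈ B then (1:NNReal) else 0) * ((if Sum.inr (Sum.inl (v, i)) ∈ B then (0:NNReal) else 1) * ((P:NNReal) * c ↑u ↑v)))
    + (∑ u : ↥(S \ S'), ∑ v : {v : V // v ∉ S}, (if Sum.inr (Sum.inl (u, i)) ∈ B then (1:NNReal) else 0) * ((if Sum.inl v ∈ B then (0:NNReal) else 1) * ((P:NNReal) * c ↑u ↑v)))
    + (∑ u : ↥(S \ S'), ∑ v : ↥(S \ S'), (if Sum.inr (Sum.inl (u, i)) ∈ B then (1:NNReal) else 0) * ((if Sum.inr (Sum.inl (v, i)) ∈ B then (0:NNReal) else 1) * ((P:NNReal) * c ↑u ↑v)))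
    + (∑ u : ↥(S \ S'), ∑ v : ↥S', (if Sum.inr (Sum.inl (u, i)) ∈ B then (1:NNReal) else 0) * ((if Sum.inr (Sum.inr (v, i, j)) ∈ B then (0:NNReal) else 1) * ((P:NNReal) * (Q:NNReal) * c ↑u ↑v)))
    + (∑ u : ↥S', ∑ v : ↥(S \ S'), (if Sum.inr (Sum.inr (u, i, j)) ∈ B then (1:NNReal) else 0) * ((if Sum.inr (Sum.inl (v, i)) ∈ B then (0:NNReal) else 1) * ((P:NNReal) * (Q:NNReal) * c ↑u ↑v)))
    + (∑ u : ↥S', ∑ v : ↥S', (if Sum.inr (Sum.inr (u, i, j)) ∈ B then (1:NNReal) else 0) * ((if Sum.inr (Sum.inr (v, i, j)) ∈ B then (0:NNReal) else 1) * ((P:NNReal) * (Q:NNReal) * c ↑u ↑v))) := by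
  have hcOI : ∀ (u : {v : V // v ∉ S}) (v : ↥S'), c ↑u ↑v = 0 :=
    fun u v => (hnj ↑u ↑v u.2 v.2).1
  have hcIO : ∀ (u : ↥S') (v : {v : V // v ∉ S}), c ↑u ↑v = 0 :=
    fun u v => (hnj ↑v ↑u v.2 u.2).2
  rw [cutValue_eq_sum]
  simp only [sum_classes S S' hSS]
  simp only [mem_projCut_O B i j, mem_projCut_M B i j, mem_projCut_I B i j hSS]
  simp only [nestedReweight, clsO_S, clsO_S' hSS, clsM_S, clsM_S', clsI_S', clsI_S hSS,
    or_true, true_or, or_false, false_or, or_self, if_true, if_false, hcOI, hcIO,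
    mul_zero, zero_mul, Finset.sum_const_zero, add_zero, zero_add]
  simp only [Finset.sum_add_distrib, add_zero, zero_add]
  ring

set_option maxHeartbeats 4000000 in
lemma keyIdentity {V : Type*} [Fintype V] (c : V → V → NNReal) (S S' : Set V)
    (hSS : S' ⊆ S) (P Q : ℕ)
    (hnj : ∀ u v, u ∉ S → v ∈ S' → c u v = 0 ∧ c v u = 0)
    (B : Finset ({v : V // v ∉ S} ⊕ ((↥(S \ S') × Fin P) ⊕ (↥S' × (Fin P × Fin Q))))) :
    ∑ i : Fin P, ∑ j : Fin Q, cutValue (nestedReweight c S S' P Q) (projCut B i j)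
      = (P : NNReal) * (Q : NNReal) * cutValue (twoLevelCap c S S' P Q) B := by
  have h1 : (∑ _i : Fin P, ∑ _j : Fin Q, (∑ u : {v : V // v ∉ S}, ∑ v : {v : V // v ∉ S}, (if Sum.inl u ∈ B then (1:NNReal) else 0) * ((if Sum.inl v ∈ B then (0:NNReal) else 1) * c ↑u ↑v)))
      = (P:NNReal) * (Q:NNReal) * (∑ u : {v : V // v ∉ S}, ∑ v : {v : V // v ∉ S}, (if Sum.inl u ∈ B then (1:NNReal) else 0) * ((if Sum.inl v ∈ B then (0:NNReal) else 1) * c ↑u ↑v)) := by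
    simp only [Finset.sum_const, Finset.card_univ, Fintype.card_fin, nsmul_eq_mul]
    ring
  have h2 : (∑ i : Fin P, ∑ _j : Fin Q, (∑ u : {v : V // v ∉ S}, ∑ v : ↥(S \ S'), (if Sum.inl u ∈ B then (1:NNReal) else 0) * ((if Sum.inr (Sum.inl (v, i)) ∈ B then (0:NNReal) else 1) * ((P:NNReal) * c ↑u ↑v))))
      = (P:NNReal) * (Q:NNReal) * (∑ u : {v : V // v ∉ S}, ∑ v : ↥(S \ S'), ∑ i : Fin P, (if Sum.inl u ∈ B then (1:NNReal) else 0) * ((if Sum.inr (Sum.inl (v, i)) ∈ B then (0:NNReal) else 1) * c ↑u ↑v)) := by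
    calc ∑ i : Fin P, ∑ _j : Fin Q, (∑ u : {v : V // v ∉ S}, ∑ v : ↥(S \ S'), (if Sum.inl u ∈ B then (1:NNReal) else 0) * ((if Sum.inr (Sum.inl (v, i)) ∈ B then (0:NNReal) else 1) * ((P:NNReal) * c ↑u ↑v)))
        = ∑ i : Fin P, (Q:NNReal) * (∑ u : {v : V // v ∉ S}, ∑ v : ↥(S \ S'), (if Sum.inl u ∈ B then (1:NNReal) else 0) * ((if Sum.inr (Sum.inl (v, i)) ∈ B then (0:NNReal) else 1) * ((P:NNReal) * c ↑u ↑v))) := Finset.sum_congr rfl fun i _ => by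
          rw [Finset.sum_const, Finset.card_univ, Fintype.card_fin, nsmul_eq_mul]
      _ = (Q:NNReal) * ∑ i : Fin P, (∑ u : {v : V // v ∉ S}, ∑ v : ↥(S \ S'), (if Sum.inl u ∈ B then (1:NNReal) else 0) * ((if Sum.inr (Sum.inl (v, i)) ∈ B then (0:NNReal) else 1) * ((P:NNReal) * c ↑u ↑v))) := by rw [Finset.mul_sum]
      _ = (Q:NNReal) * ∑ i : Fin P, (P:NNReal) * (∑ u : {v : V // v ∉ S}, ∑ v : ↥(S \ S'), (if Sum.inl u ∈ B then (1:NNReal) else 0) * ((if Sum.inr (Sum.inl (v, i)) ∈ B then (0:NNReal) else 1) * c ↑u ↑v)) := by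
          refine congrArg _ (Finset.sum_congr rfl fun i _ => ?_)
          rw [Finset.mul_sum]; refine Finset.sum_congr rfl fun u _ => ?_
          rw [Finset.mul_sum]; refine Finset.sum_congr rfl fun v _ => ?_
          ring
      _ = (Q:NNReal) * ((P:NNReal) * ∑ i : Fin P, (∑ u : {v : V // v ∉ S}, ∑ v : ↥(S \ S'), (if Sum.inl u ∈ B then (1:NNReal) else 0) * ((if Sum.inr (Sum.inl (v, i)) ∈ B then (0:NNReal) else 1) * c ↑u ↑v))) := congrArg _ (Finset.mul_sum _ _ _).symm
      _ = (Q:NNReal) * ((P:NNReal) * (∑ u : {v : V // v ∉ S}, ∑ v : ↥(S \ S'), ∑ i : Fin P, (if Sum.inl u ∈ B then (1:NNReal) else 0) * ((if Sum.inr (Sum.inl (v, i)) ∈ B then (0:NNReal) else 1) * c ↑u ↑v))) := by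
          refine congrArg _ (congrArg _ ?_)
          exact sum_swap3 (fun i u v => (if Sum.inl u ∈ B then (1:NNReal) else 0) * ((if Sum.inr (Sum.inl (v, i)) ∈ B then (0:NNReal) else 1) * c ↑u ↑v))
      _ = (P:NNReal) * (Q:NNReal) * (∑ u : {v : V // v ∉ S}, ∑ v : ↥(S \ S'), ∑ i : Fin P, (if Sum.inl u ∈ B then (1:NNReal) else 0) * ((if Sum.inr (Sum.inl (v, i)) ∈ B then (0:NNReal) else 1) * c ↑u ↑v)) := by ring
  have h3 : (∑ i : Fin P, ∑ _j : Fin Q, (∑ u : ↥(S \ S'), ∑ v : {v : V // v ∉ S}, (if Sum.inr (Sum.inl (u, i)) ∈ B then (1:NNReal) else 0) * ((if Sum.inl v ∈ B then (0:NNReal) else 1) * ((P:NNReal) * c ↑u ↑v))))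
      = (P:NNReal) * (Q:NNReal) * (∑ u : ↥(S \ S'), ∑ i : Fin P, ∑ v : {v : V // v ∉ S}, (if Sum.inr (Sum.inl (u, i)) ∈ B then (1:NNReal) else 0) * ((if Sum.inl v ∈ B then (0:NNReal) else 1) * c ↑u ↑v)) := by
    calc ∑ i : Fin P, ∑ _j : Fin Q, (∑ u : ↥(S \ S'), ∑ v : {v : V // v ∉ S}, (if Sum.inr (Sum.inl (u, i)) ∈ B then (1:NNReal) else 0) * ((if Sum.inl v ∈ B then (0:NNReal) else 1) * ((P:NNReal) * c ↑u ↑v)))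
        = ∑ i : Fin P, (Q:NNReal) * (∑ u : ↥(S \ S'), ∑ v : {v : V // v ∉ S}, (if Sum.inr (Sum.inl (u, i)) ∈ B then (1:NNReal) else 0) * ((if Sum.inl v ∈ B then (0:NNReal) else 1) * ((P:NNReal) * c ↑u ↑v))) := Finset.sum_congr rfl fun i _ => by
          rw [Finset.sum_const, Finset.card_univ, Fintype.card_fin, nsmul_eq_mul]
      _ = (Q:NNReal) * ∑ i : Fin P, (∑ u : ↥(S \ S'), ∑ v : {v : V // v ∉ S}, (if Sum.inr (Sum.inl (u, i)) ∈ B then (1:NNReal) else 0) * ((if Sum.inl v ∈ B then (0:NNReal) else 1) * ((P:NNReal) * c ↑u ↑v))) := by rw [Finset.mul_sum]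
      _ = (Q:NNReal) * ∑ i : Fin P, (P:NNReal) * (∑ u : ↥(S \ S'), ∑ v : {v : V // v ∉ S}, (if Sum.inr (Sum.inl (u, i)) ∈ B then (1:NNReal) else 0) * ((if Sum.inl v ∈ B then (0:NNReal) else 1) * c ↑u ↑v)) := by
          refine congrArg _ (Finset.sum_congr rfl fun i _ => ?_)
          rw [Finset.mul_sum]; refine Finset.sum_congr rfl fun u _ => ?_
          rw [Finset.mul_sum]; refine Finset.sum_congr rfl fun v _ => ?_
          ring
      _ = (Q:NNReal) * ((P:NNReal) * ∑ i : Fin P, (∑ u : ↥(S \ S'), ∑ v : {v : V // v ∉ S}, (if Sum.inr (Sum.inl (u, i)) ∈ B then (1:NNReal) else 0) * ((if Sum.inl v ∈ B then (0:NNReal) else 1) * c ↑u ↑v))) := congrArg _ (Finset.mul_sum _ _ _).symm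
      _ = (Q:NNReal) * ((P:NNReal) * (∑ u : ↥(S \ S'), ∑ i : Fin P, ∑ v : {v : V // v ∉ S}, (if Sum.inr (Sum.inl (u, i)) ∈ B then (1:NNReal) else 0) * ((if Sum.inl v ∈ B then (0:NNReal) else 1) * c ↑u ↑v))) := by
          refine congrArg _ (congrArg _ ?_)
          exact Finset.sum_comm
      _ = (P:NNReal) * (Q:NNReal) * (∑ u : ↥(S \ S'), ∑ i : Fin P, ∑ v : {v : V // v ∉ S}, (if Sum.inr (Sum.inl (u, i)) ∈ B then (1:NNReal) else 0) * ((if Sum.inl v ∈ B then (0:NNReal) else 1) * c ↑u ↑v)) := by ring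
  have h4 : (∑ i : Fin P, ∑ _j : Fin Q, (∑ u : ↥(S \ S'), ∑ v : ↥(S \ S'), (if Sum.inr (Sum.inl (u, i)) ∈ B then (1:NNReal) else 0) * ((if Sum.inr (Sum.inl (v, i)) ∈ B then (0:NNReal) else 1) * ((P:NNReal) * c ↑u ↑v))))
      = (P:NNReal) * (Q:NNReal) * (∑ u : ↥(S \ S'), ∑ i : Fin P, ∑ v : ↥(S \ S'), (if Sum.inr (Sum.inl (u, i)) ∈ B then (1:NNReal) else 0) * ((if Sum.inr (Sum.inl (v, i)) ∈ B then (0:NNReal) else 1) * c ↑u ↑v)) := by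
    calc ∑ i : Fin P, ∑ _j : Fin Q, (∑ u : ↥(S \ S'), ∑ v : ↥(S \ S'), (if Sum.inr (Sum.inl (u, i)) ∈ B then (1:NNReal) else 0) * ((if Sum.inr (Sum.inl (v, i)) ∈ B then (0:NNReal) else 1) * ((P:NNReal) * c ↑u ↑v)))
        = ∑ i : Fin P, (Q:NNReal) * (∑ u : ↥(S \ S'), ∑ v : ↥(S \ S'), (if Sum.inr (Sum.inl (u, i)) ∈ B then (1:NNReal) else 0) * ((if Sum.inr (Sum.inl (v, i)) ∈ B then (0:NNReal) else 1) * ((P:NNReal) * c ↑u ↑v))) := Finset.sum_congr rfl fun i _ => by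
          rw [Finset.sum_const, Finset.card_univ, Fintype.card_fin, nsmul_eq_mul]
      _ = (Q:NNReal) * ∑ i : Fin P, (∑ u : ↥(S \ S'), ∑ v : ↥(S \ S'), (if Sum.inr (Sum.inl (u, i)) ∈ B then (1:NNReal) else 0) * ((if Sum.inr (Sum.inl (v, i)) ∈ B then (0:NNReal) else 1) * ((P:NNReal) * c ↑u ↑v))) := by rw [Finset.mul_sum]
      _ = (Q:NNReal) * ∑ i : Fin P, (P:NNReal) * (∑ u : ↥(S \ S'), ∑ v : ↥(S \ S'), (if Sum.inr (Sum.inl (u, i)) ∈ B then (1:NNReal) else 0) * ((if Sum.inr (Sum.inl (v, i)) ∈ B then (0:NNReal) else 1) * c ↑u ↑v)) := by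
          refine congrArg _ (Finset.sum_congr rfl fun i _ => ?_)
          rw [Finset.mul_sum]; refine Finset.sum_congr rfl fun u _ => ?_
          rw [Finset.mul_sum]; refine Finset.sum_congr rfl fun v _ => ?_
          ring
      _ = (Q:NNReal) * ((P:NNReal) * ∑ i : Fin P, (∑ u : ↥(S \ S'), ∑ v : ↥(S \ S'), (if Sum.inr (Sum.inl (u, i)) ∈ B then (1:NNReal) else 0) * ((if Sum.inr (Sum.inl (v, i)) ∈ B then (0:NNReal) else 1) * c ↑u ↑v))) := congrArg _ (Finset.mul_sum _ _ _).symm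
      _ = (Q:NNReal) * ((P:NNReal) * (∑ u : ↥(S \ S'), ∑ i : Fin P, ∑ v : ↥(S \ S'), (if Sum.inr (Sum.inl (u, i)) ∈ B then (1:NNReal) else 0) * ((if Sum.inr (Sum.inl (v, i)) ∈ B then (0:NNReal) else 1) * c ↑u ↑v))) := by
          refine congrArg _ (congrArg _ ?_)
          exact Finset.sum_comm
      _ = (P:NNReal) * (Q:NNReal) * (∑ u : ↥(S \ S'), ∑ i : Fin P, ∑ v : ↥(S \ S'), (if Sum.inr (Sum.inl (u, i)) ∈ B then (1:NNReal) else 0) * ((if Sum.inr (Sum.inl (v, i)) ∈ B then (0:NNReal) else 1) * c ↑u ↑v)) := by ring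
  have h5 : (∑ i : Fin P, ∑ j : Fin Q, (∑ u : ↥(S \ S'), ∑ v : ↥S', (if Sum.inr (Sum.inl (u, i)) ∈ B then (1:NNReal) else 0) * ((if Sum.inr (Sum.inr (v, i, j)) ∈ B then (0:NNReal) else 1) * ((P:NNReal) * (Q:NNReal) * c ↑u ↑v))))
      = (P:NNReal) * (Q:NNReal) * (∑ u : ↥(S \ S'), ∑ i : Fin P, ∑ v : ↥S', ∑ j : Fin Q, (if Sum.inr (Sum.inl (u, i)) ∈ B then (1:NNReal) else 0) * ((if Sum.inr (Sum.inr (v, i, j)) ∈ B then (0:NNReal) else 1) * c ↑u ↑v)) := by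
    calc ∑ i : Fin P, ∑ j : Fin Q, (∑ u : ↥(S \ S'), ∑ v : ↥S', (if Sum.inr (Sum.inl (u, i)) ∈ B then (1:NNReal) else 0) * ((if Sum.inr (Sum.inr (v, i, j)) ∈ B then (0:NNReal) else 1) * ((P:NNReal) * (Q:NNReal) * c ↑u ↑v)))
        = ∑ i : Fin P, ∑ j : Fin Q, (P:NNReal) * (Q:NNReal) * (∑ u : ↥(S \ S'), ∑ v : ↥S', (if Sum.inr (Sum.inl (u, i)) ∈ B then (1:NNReal) else 0) * ((if Sum.inr (Sum.inr (v, i, j)) ∈ B then (0:NNReal) else 1) * c ↑u ↑v)) := by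
          refine Finset.sum_congr rfl fun i _ => Finset.sum_congr rfl fun j _ => ?_
          rw [Finset.mul_sum]; refine Finset.sum_congr rfl fun u _ => ?_
          rw [Finset.mul_sum]; refine Finset.sum_congr rfl fun v _ => ?_
          ring
      _ = (P:NNReal) * (Q:NNReal) * ∑ i : Fin P, ∑ j : Fin Q, (∑ u : ↥(S \ S'), ∑ v : ↥S', (if Sum.inr (Sum.inl (u, i)) ∈ B then (1:NNReal) else 0) * ((if Sum.inr (Sum.inr (v, i, j)) ∈ B then (0:NNReal) else 1) * c ↑u ↑v)) := by
          rw [Finset.mul_sum]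
          refine Finset.sum_congr rfl fun i _ => ?_
          rw [Finset.mul_sum]
      _ = (P:NNReal) * (Q:NNReal) * (∑ u : ↥(S \ S'), ∑ i : Fin P, ∑ v : ↥S', ∑ j : Fin Q, (if Sum.inr (Sum.inl (u, i)) ∈ B then (1:NNReal) else 0) * ((if Sum.inr (Sum.inr (v, i, j)) ∈ B then (0:NNReal) else 1) * c ↑u ↑v)) := by
          refine congrArg _ ?_
          exact sum_swap4MI (fun i j u v => (if Sum.inr (Sum.inl (u, i)) ∈ B then (1:NNReal) else 0) * ((if Sum.inr (Sum.inr (v, i, j)) ∈ B then (0:NNReal) else 1) * c ↑u ↑v))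
  have h6 : (∑ i : Fin P, ∑ j : Fin Q, (∑ u : ↥S', ∑ v : ↥(S \ S'), (if Sum.inr (Sum.inr (u, i, j)) ∈ B then (1:NNReal) else 0) * ((if Sum.inr (Sum.inl (v, i)) ∈ B then (0:NNReal) else 1) * ((P:NNReal) * (Q:NNReal) * c ↑u ↑v))))
      = (P:NNReal) * (Q:NNReal) * (∑ u : ↥S', ∑ i : Fin P, ∑ j : Fin Q, ∑ v : ↥(S \ S'), (if Sum.inr (Sum.inr (u, i, j)) ∈ B then (1:NNReal) else 0) * ((if Sum.inr (Sum.inl (v, i)) ∈ B then (0:NNReal) else 1) * c ↑u ↑v)) := by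
    calc ∑ i : Fin P, ∑ j : Fin Q, (∑ u : ↥S', ∑ v : ↥(S \ S'), (if Sum.inr (Sum.inr (u, i, j)) ∈ B then (1:NNReal) else 0) * ((if Sum.inr (Sum.inl (v, i)) ∈ B then (0:NNReal) else 1) * ((P:NNReal) * (Q:NNReal) * c ↑u ↑v)))
        = ∑ i : Fin P, ∑ j : Fin Q, (P:NNReal) * (Q:NNReal) * (∑ u : ↥S', ∑ v : ↥(S \ S'), (if Sum.inr (Sum.inr (u, i, j)) ∈ B then (1:NNReal) else 0) * ((if Sum.inr (Sum.inl (v, i)) ∈ B then (0:NNReal) else 1) * c ↑u ↑v)) := by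
          refine Finset.sum_congr rfl fun i _ => Finset.sum_congr rfl fun j _ => ?_
          rw [Finset.mul_sum]; refine Finset.sum_congr rfl fun u _ => ?_
          rw [Finset.mul_sum]; refine Finset.sum_congr rfl fun v _ => ?_
          ring
      _ = (P:NNReal) * (Q:NNReal) * ∑ i : Fin P, ∑ j : Fin Q, (∑ u : ↥S', ∑ v : ↥(S \ S'), (if Sum.inr (Sum.inr (u, i, j)) ∈ B then (1:NNReal) else 0) * ((if Sum.inr (Sum.inl (v, i)) ∈ B then (0:NNReal) else 1) * c ↑u ↑v)) := by
          rw [Finset.mul_sum]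
          refine Finset.sum_congr rfl fun i _ => ?_
          rw [Finset.mul_sum]
      _ = (P:NNReal) * (Q:NNReal) * (∑ u : ↥S', ∑ i : Fin P, ∑ j : Fin Q, ∑ v : ↥(S \ S'), (if Sum.inr (Sum.inr (u, i, j)) ∈ B then (1:NNReal) else 0) * ((if Sum.inr (Sum.inl (v, i)) ∈ B then (0:NNReal) else 1) * c ↑u ↑v)) := by
          refine congrArg _ ?_
          exact sum_swap4I (fun i j u v => (if Sum.inr (Sum.inr (u, i, j)) ∈ B then (1:NNReal) else 0) * ((if Sum.inr (Sum.inl (v, i)) ∈ B then (0:NNReal) else 1) * c ↑u ↑v))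
  have h7 : (∑ i : Fin P, ∑ j : Fin Q, (∑ u : ↥S', ∑ v : ↥S', (if Sum.inr (Sum.inr (u, i, j)) ∈ B then (1:NNReal) else 0) * ((if Sum.inr (Sum.inr (v, i, j)) ∈ B then (0:NNReal) else 1) * ((P:NNReal) * (Q:NNReal) * c ↑u ↑v))))
      = (P:NNReal) * (Q:NNReal) * (∑ u : ↥S', ∑ i : Fin P, ∑ j : Fin Q, ∑ v : ↥S', (if Sum.inr (Sum.inr (u, i, j)) ∈ B then (1:NNReal) else 0) * ((if Sum.inr (Sum.inr (v, i, j)) ∈ B then (0:NNReal) else 1) * c ↑u ↑v)) := by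
    calc ∑ i : Fin P, ∑ j : Fin Q, (∑ u : ↥S', ∑ v : ↥S', (if Sum.inr (Sum.inr (u, i, j)) ∈ B then (1:NNReal) else 0) * ((if Sum.inr (Sum.inr (v, i, j)) ∈ B then (0:NNReal) else 1) * ((P:NNReal) * (Q:NNReal) * c ↑u ↑v)))
        = ∑ i : Fin P, ∑ j : Fin Q, (P:NNReal) * (Q:NNReal) * (∑ u : ↥S', ∑ v : ↥S', (if Sum.inr (Sum.inr (u, i, j)) ∈ B then (1:NNReal) else 0) * ((if Sum.inr (Sum.inr (v, i, j)) ∈ B then (0:NNReal) else 1) * c ↑u ↑v)) := by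
          refine Finset.sum_congr rfl fun i _ => Finset.sum_congr rfl fun j _ => ?_
          rw [Finset.mul_sum]; refine Finset.sum_congr rfl fun u _ => ?_
          rw [Finset.mul_sum]; refine Finset.sum_congr rfl fun v _ => ?_
          ring
      _ = (P:NNReal) * (Q:NNReal) * ∑ i : Fin P, ∑ j : Fin Q, (∑ u : ↥S', ∑ v : ↥S', (if Sum.inr (Sum.inr (u, i, j)) ∈ B then (1:NNReal) else 0) * ((if Sum.inr (Sum.inr (v, i, j)) ∈ B then (0:NNReal) else 1) * c ↑u ↑v)) := by
          rw [Finset.mul_sum]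
          refine Finset.sum_congr rfl fun i _ => ?_
          rw [Finset.mul_sum]
      _ = (P:NNReal) * (Q:NNReal) * (∑ u : ↥S', ∑ i : Fin P, ∑ j : Fin Q, ∑ v : ↥S', (if Sum.inr (Sum.inr (u, i, j)) ∈ B then (1:NNReal) else 0) * ((if Sum.inr (Sum.inr (v, i, j)) ∈ B then (0:NNReal) else 1) * c ↑u ↑v)) := by
          refine congrArg _ ?_
          exact sum_swap4I (fun i j u v => (if Sum.inr (Sum.inr (u, i, j)) ∈ B then (1:NNReal) else 0) * ((if Sum.inr (Sum.inr (v, i, j)) ∈ B then (0:NNReal) else 1) * c ↑u ↑v))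
  calc ∑ i : Fin P, ∑ j : Fin Q, cutValue (nestedReweight c S S' P Q) (projCut B i j)
      = ∑ i : Fin P, ∑ j : Fin Q,
          ((∑ u : {v : V // v ∉ S}, ∑ v : {v : V // v ∉ S}, (if Sum.inl u ∈ B then (1:NNReal) else 0) * ((if Sum.inl v ∈ B then (0:NNReal) else 1) * c ↑u ↑v))
          + (∑ u : {v : V // v ∉ S}, ∑ v : ↥(S \ S'), (if Sum.inl u ∈ B then (1:NNReal) else 0) * ((if Sum.inr (Sum.inl (v, i)) ∈ B then (0:NNReal) else 1) * ((P:NNReal) * c ↑u ↑v)))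
          + (∑ u : ↥(S \ S'), ∑ v : {v : V // v ∉ S}, (if Sum.inr (Sum.inl (u, i)) ∈ B then (1:NNReal) else 0) * ((if Sum.inl v ∈ B then (0:NNReal) else 1) * ((P:NNReal) * c ↑u ↑v)))
          + (∑ u : ↥(S \ S'), ∑ v : ↥(S \ S'), (if Sum.inr (Sum.inl (u, i)) ∈ B then (1:NNReal) else 0) * ((if Sum.inr (Sum.inl (v, i)) ∈ B then (0:NNReal) else 1) * ((P:NNReal) * c ↑u ↑v)))
          + (∑ u : ↥(S \ S'), ∑ v : ↥S', (if Sum.inr (Sum.inl (u, i)) ∈ B then (1:NNReal) else 0) * ((if Sum.inr (Sum.inr (v, i, j)) ∈ B then (0:NNReal) else 1) * ((P:NNReal) * (Q:NNReal) * c ↑u ↑v)))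
          + (∑ u : ↥S', ∑ v : ↥(S \ S'), (if Sum.inr (Sum.inr (u, i, j)) ∈ B then (1:NNReal) else 0) * ((if Sum.inr (Sum.inl (v, i)) ∈ B then (0:NNReal) else 1) * ((P:NNReal) * (Q:NNReal) * c ↑u ↑v)))
          + (∑ u : ↥S', ∑ v : ↥S', (if Sum.inr (Sum.inr (u, i, j)) ∈ B then (1:NNReal) else 0) * ((if Sum.inr (Sum.inr (v, i, j)) ∈ B then (0:NNReal) else 1) * ((P:NNReal) * (Q:NNReal) * c ↑u ↑v)))) :=
        Finset.sum_congr rfl fun i _ => Finset.sum_congr rfl fun j _ =>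
          smallExpand c S S' hSS P Q hnj B i j
    _ = (∑ _i : Fin P, ∑ _j : Fin Q, (∑ u : {v : V // v ∉ S}, ∑ v : {v : V // v ∉ S}, (if Sum.inl u ∈ B then (1:NNReal) else 0) * ((if Sum.inl v ∈ B then (0:NNReal) else 1) * c ↑u ↑v)))
        + (∑ i : Fin P, ∑ _j : Fin Q, (∑ u : {v : V // v ∉ S}, ∑ v : ↥(S \ S'), (if Sum.inl u ∈ B then (1:NNReal) else 0) * ((if Sum.inr (Sum.inl (v, i)) ∈ B then (0:NNReal) else 1) * ((P:NNReal) * c ↑u ↑v))))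
        + (∑ i : Fin P, ∑ _j : Fin Q, (∑ u : ↥(S \ S'), ∑ v : {v : V // v ∉ S}, (if Sum.inr (Sum.inl (u, i)) ∈ B then (1:NNReal) else 0) * ((if Sum.inl v ∈ B then (0:NNReal) else 1) * ((P:NNReal) * c ↑u ↑v))))
        + (∑ i : Fin P, ∑ _j : Fin Q, (∑ u : ↥(S \ S'), ∑ v : ↥(S \ S'), (if Sum.inr (Sum.inl (u, i)) ∈ B then (1:NNReal) else 0) * ((if Sum.inr (Sum.inl (v, i)) ∈ B then (0:NNReal) else 1) * ((P:NNReal) * c ↑u ↑v))))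
        + (∑ i : Fin P, ∑ j : Fin Q, (∑ u : ↥(S \ S'), ∑ v : ↥S', (if Sum.inr (Sum.inl (u, i)) ∈ B then (1:NNReal) else 0) * ((if Sum.inr (Sum.inr (v, i, j)) ∈ B then (0:NNReal) else 1) * ((P:NNReal) * (Q:NNReal) * c ↑u ↑v))))
        + (∑ i : Fin P, ∑ j : Fin Q, (∑ u : ↥S', ∑ v : ↥(S \ S'), (if Sum.inr (Sum.inr (u, i, j)) ∈ B then (1:NNReal) else 0) * ((if Sum.inr (Sum.inl (v, i)) ∈ B then (0:NNReal) else 1) * ((P:NNReal) * (Q:NNReal) * c ↑u ↑v))))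
        + (∑ i : Fin P, ∑ j : Fin Q, (∑ u : ↥S', ∑ v : ↥S', (if Sum.inr (Sum.inr (u, i, j)) ∈ B then (1:NNReal) else 0) * ((if Sum.inr (Sum.inr (v, i, j)) ∈ B then (0:NNReal) else 1) * ((P:NNReal) * (Q:NNReal) * c ↑u ↑v)))) := by
          simp only [Finset.sum_add_distrib]
    _ = (P:NNReal) * (Q:NNReal) * cutValue (twoLevelCap c S S' P Q) B := by
          rw [h1, h2, h3, h4, h5, h6, h7, bigExpand c S S' P Q B]
          ring

end aux

theorem minCut_twoLevel_eq_minCut_nestedReweight {V : Type*} [Fintype V]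
    (c : V → V → NNReal) (S S' : Set V) (hSS : S' ⊆ S) (P Q : ℕ)
    (hP : 1 ≤ P) (hQ : 1 ≤ Q)
    (s t : V) (hst : s ≠ t) (hs : s ∉ S) (ht : t ∉ S)
    (hnj : ∀ u v, u ∉ S → v ∈ S' → c u v = 0 ∧ c v u = 0) :
    minCutValue (twoLevelCap c S S' P Q) (Sum.inl ⟨s, hs⟩) (Sum.inl ⟨t, ht⟩) =
      minCutValue (nestedReweight c S S' P Q) s t := by
  have hPQ : ((P : NNReal) * (Q : NNReal)) ≠ 0 :=
    mul_ne_zero (Nat.cast_ne_zero.2 (by omega)) (Nat.cast_ne_zero.2 (by omega))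
  have hlift : ∀ A : Finset V,
      cutValue (twoLevelCap c S S' P Q) (liftCut A : Finset _)
        = cutValue (nestedReweight c S S' P Q) A := by
    intro A
    have h := keyIdentity c S S' hSS P Q hnj (liftCut A)
    rw [show (∑ i : Fin P, ∑ j : Fin Q,
        cutValue (nestedReweight c S S' P Q) (projCut (liftCut A) i j))
        = ∑ _i : Fin P, ∑ _j : Fin Q, cutValue (nestedReweight c S S' P Q) A from
      Finset.sum_congr rfl fun i _ => Finset.sum_congr rfl fun j _ => by
        rw [projCut_liftCut]] at h
    simp only [Finset.sum_const, Finset.card_univ, Fintype.card_fin, nsmul_eq_mul] at h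
    rw [← mul_assoc] at h
    exact (mul_left_cancel₀ hPQ h).symm
  unfold minCutValue
  apply le_antisymm
  · apply csInf_le_csInf (OrderBot.bddBelow _)
    · exact ⟨_, {s}, Finset.mem_singleton_self s, by simp [hst.symm], rfl⟩
    · rintro x ⟨A, hsA, htA, rfl⟩
      refine ⟨liftCut A, ?_, ?_, hlift A⟩
      · exact (mem_liftCut A _).2 hsA
      · exact fun h => htA ((mem_liftCut A _).1 h)
  · apply le_csInf
    · refine ⟨_, {Sum.inl ⟨s, hs⟩}, Finset.mem_singleton_self _, ?_, rfl⟩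
      simp only [Finset.mem_singleton]
      intro h
      exact hst (by injection h with h'; exact (congrArg Subtype.val h').symm)
    · rintro x ⟨B, hsB, htB, rfl⟩
      have hpos : (0 : NNReal) < (P : NNReal) * (Q : NNReal) := zero_lt_iff.2 hPQ
      have key := keyIdentity c S S' hSS P Q hnj B
      have hle : (P : NNReal) * (Q : NNReal)
            * sInf {x : NNReal | ∃ A : Finset V, s ∈ A ∧ t ∉ A
                ∧ cutValue (nestedReweight c S S' P Q) A = x}
          ≤ (P : NNReal) * (Q : NNReal) * cutValue (twoLevelCap c S S' P Q) B := by
        rw [← key]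
        calc (P : NNReal) * (Q : NNReal) * sInf _
            = ∑ _i : Fin P, ∑ _j : Fin Q, sInf {x : NNReal | ∃ A : Finset V, s ∈ A ∧ t ∉ A
                ∧ cutValue (nestedReweight c S S' P Q) A = x} := by
              simp only [Finset.sum_const, Finset.card_univ, Fintype.card_fin, nsmul_eq_mul]
              ring
          _ ≤ ∑ i : Fin P, ∑ j : Fin Q,
              cutValue (nestedReweight c S S' P Q) (projCut B i j) := by
              refine Finset.sum_le_sum fun i _ => Finset.sum_le_sum fun j _ => ?_
              refine csInf_le (OrderBot.bddBelow _) ⟨projCut B i j, ?_, ?_, rfl⟩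
              · exact (mem_projCut_O B i j ⟨s, hs⟩).2 hsB
              · exact fun h => htB ((mem_projCut_O B i j ⟨t, ht⟩).1 h)
      exact le_of_mul_le_mul_left hle hpos

end
end

section
/- Let V be a finite type, c : V → V → ℝ≥0 a capacity function, S' ⊆ S ⊆ V nested subsets, P, Q ≥ 1 integers, and s, t distinct vertices of V with s ∉ S and t ∉ S. Assume the no-jumping condition: c u v = 0 and c v u = 0 whenever u ∉ S and v ∈ S'. Then the two-level instantiation c_{P,Q} of (S, S') admits a minimum s-t cut A such that all copies of every vertex of V lie on the same side of A: for every v ∈ S \ S' and all i, i' : Fin P, (v,i) ∈ A iff (v,i') ∈ A, and for every v ∈ S' and all (i,j), (i',j') : Fin P × Fin Q, (v,(i,j)) ∈ A iff (v,(i',j')) ∈ A. -/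
/-!
The copy permutations `(v, i) ↦ (v, σ i)` and `(v, (i, j)) ↦ (v, (σ i, τ j))` are automorphisms of
the two-level instantiation fixing `s` and `t`, so they permute its minimum `s`-`t` cuts. By
submodularity of the cut function the minimum cuts are closed under intersection, hence the
intersection of all of them is itself a minimum cut; being canonical, it is invariant under every
copy permutation, so all copies of a vertex lie on the same side of it.
-/

open Finset

attribute [local instance] Classical.propDecidable

noncomputable section

/-- `A` is a minimum `s`-`t` cut for the capacity function `c`. -/
def IsMinCut {W : Type*} [Fintype W] (c : W → W → NNReal) (s t : W) (A : Finset W) : Prop :=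
  s ∈ A ∧ t ∉ A ∧ ∀ B : Finset W, s ∈ B → t ∉ B → cutValue c A ≤ cutValue c B

section MinCut

variable {W : Type*} [Fintype W] {c : W → W → NNReal} {s t : W}

theorem cutValue_eq_sum_ite (c : W → W → NNReal) (A : Finset W) :
    cutValue c A = ∑ u, ∑ v, if u ∈ A ∧ v ∉ A then c u v else 0 := by
  simp only [cutValue, ite_and, ← mem_compl, sum_ite_irrel, sum_const_zero, sum_ite_mem,
    univ_inter]

theorem cutValue_inter_add_cutValue_union_le (c : W → W → NNReal) (A B : Finset W) :
    cutValue c (A ∩ B) + cutValue c (A ∪ B) ≤ cutValue c A + cutValue c B := by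
  simp only [cutValue_eq_sum_ite, ← sum_add_distrib]
  refine sum_le_sum fun u _ => sum_le_sum fun v _ => ?_
  by_cases hA : u ∈ A <;> by_cases hB : u ∈ B <;> by_cases hA' : v ∈ A <;> by_cases hB' : v ∈ B <;>
    simp [hA, hB, hA', hB']

theorem cutValue_map_equiv (g : W ≃ W) (hg : ∀ x y, c (g x) (g y) = c x y) (A : Finset W) :
    cutValue c (A.map g.toEmbedding) = cutValue c A := by
  simp only [cutValue_eq_sum_ite]
  rw [← g.sum_comp]
  refine sum_congr rfl fun u _ => ?_
  rw [← g.sum_comp]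
  simp only [mem_map_equiv, Equiv.symm_apply_apply, hg]

theorem exists_isMinCut (hst : s ≠ t) : ∃ A, IsMinCut c s t A := by
  obtain ⟨A, hA, hmin⟩ := (univ.filter fun B : Finset W => s ∈ B ∧ t ∉ B).exists_min_image
    (cutValue c) ⟨{s}, by simp [hst.symm]⟩
  simp only [mem_filter, mem_univ, true_and, and_imp] at hA hmin
  exact ⟨A, hA.1, hA.2, hmin⟩

theorem IsMinCut.inter {A B : Finset W} (hA : IsMinCut c s t A) (hB : IsMinCut c s t B) :
    IsMinCut c s t (A ∩ B) := by
  obtain ⟨hsA, htA, hminA⟩ := hA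
  obtain ⟨hsB, htB, hminB⟩ := hB
  refine ⟨mem_inter.2 ⟨hsA, hsB⟩, fun h => htA (mem_inter.1 h).1, fun C hsC htC => ?_⟩
  have hunion : cutValue c A ≤ cutValue c (A ∪ B) :=
    hminA _ (mem_union_left _ hsA) (by simp [htA, htB])
  have hsub := cutValue_inter_add_cutValue_union_le c A B
  refine le_trans (le_of_add_le_add_right (a := cutValue c A) ?_) (hminB C hsC htC)
  calc cutValue c (A ∩ B) + cutValue c A ≤ cutValue c (A ∩ B) + cutValue c (A ∪ B) := by gcongr
    _ ≤ cutValue c A + cutValue c B := hsub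
    _ = cutValue c B + cutValue c A := add_comm _ _

theorem IsMinCut.map_equiv {A : Finset W} (g : W ≃ W) (hg : ∀ x y, c (g x) (g y) = c x y)
    (hgs : g s = s) (hgt : g t = t) (hA : IsMinCut c s t A) :
    IsMinCut c s t (A.map g.toEmbedding) := by
  obtain ⟨hsA, htA, hmin⟩ := hA
  have hg' : ∀ x y, c (g.symm x) (g.symm y) = c x y := fun x y => by
    simpa using (hg (g.symm x) (g.symm y)).symm
  have hgs' : g.symm s = s := g.symm_apply_eq.2 hgs.symm
  have hgt' : g.symm t = t := g.symm_apply_eq.2 hgt.symm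
  refine ⟨by rwa [mem_map_equiv, hgs'], by rwa [mem_map_equiv, hgt'], fun B hsB htB => ?_⟩
  rw [cutValue_map_equiv g hg, ← cutValue_map_equiv g.symm hg' B]
  exact hmin _ (by rwa [mem_map_equiv, g.symm_symm, hgs])
    (by rwa [mem_map_equiv, g.symm_symm, hgt])

def leastMinCut (c : W → W → NNReal) (s t : W) : Finset W :=
  (univ.filter (IsMinCut c s t)).inf id

theorem mem_leastMinCut {x : W} : x ∈ leastMinCut c s t ↔ ∀ B, IsMinCut c s t B → x ∈ B := by
  simp [leastMinCut, mem_inf]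

theorem isMinCut_leastMinCut (hst : s ≠ t) : IsMinCut c s t (leastMinCut c s t) := by
  obtain ⟨A, hA⟩ := exists_isMinCut (c := c) hst
  have hne : (univ.filter (IsMinCut c s t)).Nonempty := ⟨A, by simpa using hA⟩
  rw [leastMinCut, ← inf'_eq_inf hne]
  exact inf'_induction hne id (p := IsMinCut c s t) (fun _ h₁ _ h₂ => h₁.inter h₂) (by simp)

theorem mem_leastMinCut_of_apply_mem (g : W ≃ W) (hg : ∀ x y, c (g x) (g y) = c x y)
    (hgs : g s = s) (hgt : g t = t) {x : W} (hx : g x ∈ leastMinCut c s t) :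
    x ∈ leastMinCut c s t :=
  mem_leastMinCut.2 fun _ hB =>
    (mem_map' g.toEmbedding).1 (mem_leastMinCut.1 hx _ (hB.map_equiv g hg hgs hgt))

end MinCut

section TwoLevel

variable {V : Type*} {S S' : Set V} {P Q : ℕ}

abbrev TwoLevelVertex (S S' : Set V) (P Q : ℕ) : Type _ :=
  {v : V // v ∉ S} ⊕ ((↥(S \ S') × Fin P) ⊕ (↥S' × (Fin P × Fin Q)))

def copyPerm (σ : Equiv.Perm (Fin P)) (τ : Equiv.Perm (Fin Q)) :
    Equiv.Perm (TwoLevelVertex S S' P Q) :=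
  (Equiv.refl _).sumCongr (((Equiv.refl _).prodCongr σ).sumCongr
    ((Equiv.refl _).prodCongr (σ.prodCongr τ)))

theorem twoLevelCap_copyPerm (c : V → V → NNReal) (σ : Equiv.Perm (Fin P))
    (τ : Equiv.Perm (Fin Q)) (x y : TwoLevelVertex S S' P Q) :
    twoLevelCap c S S' P Q (copyPerm σ τ x) (copyPerm σ τ y) = twoLevelCap c S S' P Q x y := by
  rcases x with u | ⟨u, i⟩ | ⟨u, i, j⟩ <;> rcases y with v | ⟨v, i'⟩ | ⟨v, i', j'⟩ <;>
    simp [copyPerm, twoLevelCap, Prod.ext_iff]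

end TwoLevel

theorem exists_minCut_twoLevel_copies_same_side_general {V : Type*} [Fintype V]
    (c : V → V → NNReal) (S S' : Set V) (P Q : ℕ)
    (s t : V) (hst : s ≠ t) (hs : s ∉ S) (ht : t ∉ S) :
    ∃ A : Finset ({v : V // v ∉ S} ⊕ ((↥(S \ S') × Fin P) ⊕ (↥S' × (Fin P × Fin Q)))),
      IsMinCut (twoLevelCap c S S' P Q) (Sum.inl ⟨s, hs⟩) (Sum.inl ⟨t, ht⟩) A ∧
      (∀ (v : ↥(S \ S')) (i i' : Fin P),
        Sum.inr (Sum.inl (v, i)) ∈ A ↔ Sum.inr (Sum.inl (v, i')) ∈ A) ∧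
      (∀ (v : ↥S') (p p' : Fin P × Fin Q),
        Sum.inr (Sum.inr (v, p)) ∈ A ↔ Sum.inr (Sum.inr (v, p')) ∈ A) := by
  set L := leastMinCut (twoLevelCap c S S' P Q) (.inl ⟨s, hs⟩) (.inl ⟨t, ht⟩)
  have hcopy : ∀ σ τ x, copyPerm σ τ x ∈ L → x ∈ L := fun σ τ _ =>
    mem_leastMinCut_of_apply_mem _ (twoLevelCap_copyPerm c σ τ) rfl rfl
  refine ⟨L, isMinCut_leastMinCut (by simpa using hst), fun v i i' => ?_,
    fun v ⟨i, j⟩ ⟨i', j'⟩ => ?_⟩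
  · exact ⟨fun h => hcopy (.swap i i') 1 _ (by simpa [copyPerm] using h),
      fun h => hcopy (.swap i i') 1 _ (by simpa [copyPerm] using h)⟩
  · exact ⟨fun h => hcopy (.swap i i') (.swap j j') _ (by simpa [copyPerm] using h),
      fun h => hcopy (.swap i i') (.swap j j') _ (by simpa [copyPerm] using h)⟩

theorem exists_minCut_twoLevel_copies_same_side {V : Type*} [Fintype V]
    (c : V → V → NNReal) (S S' : Set V) (hSS : S' ⊆ S) (P Q : ℕ)
    (hP : 1 ≤ P) (hQ : 1 ≤ Q)
    (s t : V) (hst : s ≠ t) (hs : s ∉ S) (ht : t ∉ S)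
    (hnj : ∀ u v, u ∉ S → v ∈ S' → c u v = 0 ∧ c v u = 0) :
    ∃ A : Finset ({v : V // v ∉ S} ⊕ ((↥(S \ S') × Fin P) ⊕ (↥S' × (Fin P × Fin Q)))),
      IsMinCut (twoLevelCap c S S' P Q) (Sum.inl ⟨s, hs⟩) (Sum.inl ⟨t, ht⟩) A ∧
      (∀ (v : ↥(S \ S')) (i i' : Fin P),
        Sum.inr (Sum.inl (v, i)) ∈ A ↔ Sum.inr (Sum.inl (v, i')) ∈ A) ∧
      (∀ (v : ↥S') (p p' : Fin P × Fin Q),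
        Sum.inr (Sum.inr (v, p)) ∈ A ↔ Sum.inr (Sum.inr (v, p')) ∈ A) :=
  exists_minCut_twoLevel_copies_same_side_general c S S' P Q s t hst hs ht

end
end

section
/- Let V be a finite type, c : V → V → ℝ≥0 a capacity function, S ⊆ V a subset, P ≥ 1 an integer, and s, t distinct vertices of V with s ∉ S and t ∉ S. Let c_s : V → V → ℝ≥0 be a sibling capacity function with c_s u v = 0 unless u ∈ S and v ∈ S, and for all u, v ∈ S let σ_{u,v} : Fin P ≃ Fin P be a bijection. Then the minimum s-t cut value of the P-fold sibling replication of S equals the minimum s-t cut value of the capacity function c'' on V defined by c'' u v = P · (c u v + c_s u v) if u ∈ S or v ∈ S, and c'' u v = c u v otherwise. -/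
/-!
STATEMENT 11: The minimum s-t cut value of the P-fold sibling replication of `S` equals
the minimum s-t cut value of the capacity `c''` with `c'' u v = P·(c u v + cs u v)` if
`u ∈ S` or `v ∈ S`, and `c'' u v = c u v` otherwise.
-/

open Finset

attribute [local instance] Classical.propDecidable

noncomputable section

/-- The capacity function of the `P`-fold sibling replication of `S`, with sibling
capacities `cs` and sibling bijections `σ`. -/
def sibRepCap {V : Type*} (c cs : V → V → NNReal) (S : Set V) (P : ℕ)
    (σ : ↥S → ↥S → (Fin P ≃ Fin P)) :
    ({v : V // v ∉ S} ⊕ (↥S × Fin P)) → ({v : V // v ∉ S} ⊕ (↥S × Fin P)) → NNReal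
  | Sum.inl u, Sum.inl v => c u.1 v.1
  | Sum.inl u, Sum.inr (v, _) => c u.1 v.1
  | Sum.inr (v, _), Sum.inl u => c v.1 u.1
  | Sum.inr (u, i), Sum.inr (v, j) =>
      (if i = j then c u.1 v.1 else 0) + (if j = σ u v i then cs u.1 v.1 else 0)

lemma cutValue_eq {W : Type*} [Fintype W] (c : W → W → NNReal) (A : Finset W) :
    cutValue c A = ∑ u : W, ∑ v : W, if u ∈ A ∧ v ∉ A then c u v else 0 := by
  classical
  unfold cutValue
  rw [eq_comm]
  calc ∑ u : W, ∑ v : W, (if u ∈ A ∧ v ∉ A then c u v else 0)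
      = ∑ u : W, (if u ∈ A then ∑ v : W, (if v ∈ Aᶜ then c u v else 0) else 0) := by
        refine Finset.sum_congr rfl fun u _ => ?_
        split_ifs with h
        · simp [h]
        · simp [h]
    _ = ∑ u ∈ A, ∑ v ∈ Aᶜ, c u v := by
        rw [Finset.sum_ite_mem, Finset.univ_inter]
        refine Finset.sum_congr rfl fun u _ => ?_
        rw [Finset.sum_ite_mem, Finset.univ_inter]


lemma minCut_le {W : Type*} [Fintype W] (c : W → W → NNReal) (s t : W)
    (A : Finset W) (hsA : s ∈ A) (htA : t ∉ A) : minCutValue c s t ≤ cutValue c A :=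
  csInf_le (OrderBot.bddBelow _) ⟨A, hsA, htA, rfl⟩


lemma minCut_attained {W : Type*} [Fintype W] (c : W → W → NNReal) (s t : W) (hst : s ≠ t) :
    ∃ A : Finset W, s ∈ A ∧ t ∉ A ∧ cutValue c A = minCutValue c s t := by
  classical
  have hne : {x : NNReal | ∃ A : Finset W, s ∈ A ∧ t ∉ A ∧ cutValue c A = x}.Nonempty :=
    ⟨cutValue c {s}, {s}, Finset.mem_singleton_self s, by simp [Ne.symm hst], rfl⟩
  have hfin : {x : NNReal | ∃ A : Finset W, s ∈ A ∧ t ∉ A ∧ cutValue c A = x}.Finite := by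
    refine Set.Finite.subset (Set.finite_range (cutValue c)) ?_
    rintro x ⟨A, -, -, h⟩
    exact ⟨A, h⟩
  exact Set.Nonempty.csInf_mem hne hfin

lemma sum_ite_card {β : Type*} (s : Finset β) (p : β → Prop) [DecidablePred p] (x : NNReal) :
    ∑ i ∈ s, (if p i then x else 0) = ((s.filter p).card : NNReal) * x := by
  rw [Finset.sum_ite, Finset.sum_const_zero, add_zero, Finset.sum_const, nsmul_eq_mul]

lemma inner_pair_sum {β : Type*} [Fintype β] (p q : β → Prop) (e : β ≃ β) (x y : NNReal)
    (dc : ∀ i j : β, Decidable (p i ∧ q j)) (d1 : ∀ i j : β, Decidable (i = j))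
    (d2 : ∀ i j : β, Decidable (j = e i)) :
    (∑ i : β, ∑ j : β, (@ite _ (p i ∧ q j) (dc i j)
        (@ite _ (i = j) (d1 i j) x 0 + @ite _ (j = e i) (d2 i j) y 0) 0))
      = ((univ.filter fun i => p i ∧ q i).card : NNReal) * x
        + ((univ.filter fun i => p i ∧ q (e i)).card : NNReal) * y := by
  classical
  trans (∑ i : β, ∑ j : β,
      ((if (p i ∧ q j) ∧ i = j then x else 0) + (if (p i ∧ q j) ∧ j = e i then y else 0)))
  · refine Finset.sum_congr rfl fun i _ => Finset.sum_congr rfl fun j _ => ?_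
    split_ifs <;> first | rfl | tauto | simp_all
  · simp only [Finset.sum_add_distrib]
    congr 1
    · have h1 : ∀ i : β,
          (∑ j : β, if (p i ∧ q j) ∧ i = j then x else 0) = (if p i ∧ q i then x else 0) := by
        intro i
        rw [Finset.sum_eq_single i]
        · simp
        · intro j _ hj
          rw [if_neg]
          rintro ⟨-, h⟩
          exact hj h.symm
        · simp
      simp only [h1]
      exact sum_ite_card univ _ x
    · have h2 : ∀ i : β,
          (∑ j : β, if (p i ∧ q j) ∧ j = e i then y else 0)
            = (if p i ∧ q (e i) then y else 0) := by
        intro i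
        rw [Finset.sum_eq_single (e i)]
        · simp
        · intro j _ hj
          rw [if_neg]
          rintro ⟨-, h⟩
          exact hj h
        · simp
      simp only [h2]
      exact sum_ite_card univ _ y

lemma cut_rep_decomp {V : Type*} [Fintype V] (c cs : V → V → NNReal) (S : Set V) (P : ℕ)
    (σ : ↥S → ↥S → (Fin P ≃ Fin P))
    (B : Finset ({v : V // v ∉ S} ⊕ (↥S × Fin P))) :
    cutValue (sibRepCap c cs S P σ) B =
      ((∑ u : {v : V // v ∉ S}, ∑ v : {v : V // v ∉ S},
          if Sum.inl u ∈ B ∧ Sum.inl v ∉ B then c u.1 v.1 else 0)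
      + ∑ u : {v : V // v ∉ S}, ∑ v : ↥S,
          if Sum.inl u ∈ B then
            (((univ.filter fun j => Sum.inr (v, j) ∉ B).card : NNReal)) * c u.1 v.1 else 0)
      + ((∑ u : ↥S, ∑ v : {v : V // v ∉ S},
          if Sum.inl v ∉ B then
            (((univ.filter fun i => Sum.inr (u, i) ∈ B).card : NNReal)) * c u.1 v.1 else 0)
      + ∑ u : ↥S, ∑ v : ↥S,
          (((univ.filter fun i => Sum.inr (u, i) ∈ B ∧ Sum.inr (v, i) ∉ B).card : NNReal)
              * c u.1 v.1
            + ((univ.filter fun i =>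
                Sum.inr (u, i) ∈ B ∧ Sum.inr (v, σ u v i) ∉ B).card : NNReal)
              * cs u.1 v.1)) := by
  classical
  rw [cutValue_eq, Fintype.sum_sum_type]
  congr 1
  · -- inl part
    rw [← Finset.sum_add_distrib]
    refine Finset.sum_congr rfl fun u _ => ?_
    rw [Fintype.sum_sum_type, Fintype.sum_prod_type]
    congr 1
    · refine Finset.sum_congr rfl fun v _ => ?_
      split_ifs <;> rfl
    · refine Finset.sum_congr rfl fun v _ => ?_
      by_cases hb : Sum.inl u ∈ B
      · simp only [hb, true_and, if_true]
        exact sum_ite_card univ (fun j => Sum.inr (v, j) ∉ B) (c u.1 v.1)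
      · simp [hb]
  · -- inr part
    rw [Fintype.sum_prod_type, ← Finset.sum_add_distrib]
    refine Finset.sum_congr rfl fun u _ => ?_
    simp only [Fintype.sum_sum_type, Fintype.sum_prod_type]
    rw [Finset.sum_add_distrib]
    congr 1
    · rw [Finset.sum_comm]
      refine Finset.sum_congr rfl fun v _ => ?_
      by_cases hb : Sum.inl v ∈ B
      · simp [hb]
      · simp only [hb, not_false_iff, and_true, if_true]
        exact sum_ite_card univ (fun i => Sum.inr (u, i) ∈ B) (c u.1 v.1)
    · rw [Finset.sum_comm]
      refine Finset.sum_congr rfl fun v _ => ?_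
      convert inner_pair_sum (fun i => Sum.inr (u, i) ∈ B) (fun j => Sum.inr (v, j) ∉ B)
        (σ u v) (c u.1 v.1) (cs u.1 v.1) (fun _ _ => inferInstance) (fun _ _ => inferInstance)
        (fun _ _ => inferInstance) using 2
      refine Finset.sum_congr rfl fun j _ => ?_
      split_ifs with h h1 h2 h3
      · subst h1; simp [sibRepCap, ← h2]
      · subst h1; simp [sibRepCap, h2]
      · subst h3; simp [sibRepCap, h1]
      · simp [sibRepCap, h1, h3]
      · rfl

lemma cut_V_decomp {V : Type*} [Fintype V] (S : Set V) (c' : V → V → NNReal) (A : Finset V) :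
    cutValue c' A =
      ((∑ u : ↥S, ∑ v : ↥S, if u.1 ∈ A ∧ v.1 ∉ A then c' u.1 v.1 else 0)
      + ∑ u : ↥S, ∑ v : {x : V // x ∉ S}, if u.1 ∈ A ∧ v.1 ∉ A then c' u.1 v.1 else 0)
      + ((∑ u : {x : V // x ∉ S}, ∑ v : ↥S, if u.1 ∈ A ∧ v.1 ∉ A then c' u.1 v.1 else 0)
      + ∑ u : {x : V // x ∉ S}, ∑ v : {x : V // x ∉ S},
          if u.1 ∈ A ∧ v.1 ∉ A then c' u.1 v.1 else 0) := by
  classical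
  rw [cutValue_eq,
    ← Fintype.sum_subtype_add_sum_subtype (· ∈ S)
      (fun u => ∑ v : V, if u ∈ A ∧ v ∉ A then c' u v else 0)]
  congr 1
  · rw [← Finset.sum_add_distrib]
    refine Finset.sum_congr rfl fun u _ => ?_
    rw [← Fintype.sum_subtype_add_sum_subtype (· ∈ S)
      (fun v => if u.1 ∈ A ∧ v ∉ A then c' u.1 v else 0)]
  · rw [← Finset.sum_add_distrib]
    refine Finset.sum_congr rfl fun u _ => ?_
    rw [← Fintype.sum_subtype_add_sum_subtype (· ∈ S)
      (fun v => if u.1 ∈ A ∧ v ∉ A then c' u.1 v else 0)]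

lemma cut_to_rep {V : Type*} [Fintype V] (c cs : V → V → NNReal) (S : Set V) (P : ℕ)
    (σ : ↥S → ↥S → (Fin P ≃ Fin P))
    (hcs : ∀ u v, ¬(u ∈ S ∧ v ∈ S) → cs u v = 0) (A : Finset V) :
    cutValue (sibRepCap c cs S P σ)
      (univ.filter fun w => Sum.elim (fun u => u.1 ∈ A) (fun p => p.1.1 ∈ A) w) =
    cutValue (fun u v => if u ∈ S ∨ v ∈ S then (P : NNReal) * (c u v + cs u v) else c u v) A := by
  classical
  rw [cut_rep_decomp, cut_V_decomp S]
  have e1 : (∑ u : {v : V // v ∉ S}, ∑ v : {v : V // v ∉ S},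
        if Sum.inl u ∈ (univ.filter fun w : ({v : V // v ∉ S} ⊕ (↥S × Fin P)) =>
              Sum.elim (fun u => u.1 ∈ A) (fun p => p.1.1 ∈ A) w)
          ∧ Sum.inl v ∉ (univ.filter fun w : ({v : V // v ∉ S} ⊕ (↥S × Fin P)) =>
              Sum.elim (fun u => u.1 ∈ A) (fun p => p.1.1 ∈ A) w)
        then c u.1 v.1 else 0)
      = ∑ u : {x : V // x ∉ S}, ∑ v : {x : V // x ∉ S},
        if u.1 ∈ A ∧ v.1 ∉ A then
          (fun u v => if u ∈ S ∨ v ∈ S then (P : NNReal) * (c u v + cs u v) else c u v) u.1 v.1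
        else 0 := by
    refine Finset.sum_congr rfl fun u _ => Finset.sum_congr rfl fun v _ => ?_
    have h' : ¬(u.1 ∈ S ∨ v.1 ∈ S) := by
      rintro (h | h)
      · exact u.2 h
      · exact v.2 h
    simp [Finset.mem_filter, h']
  have e2 : (∑ u : {v : V // v ∉ S}, ∑ v : ↥S,
        if Sum.inl u ∈ (univ.filter fun w : ({v : V // v ∉ S} ⊕ (↥S × Fin P)) =>
              Sum.elim (fun u => u.1 ∈ A) (fun p => p.1.1 ∈ A) w) then
          (((univ.filter fun j => Sum.inr (v, j) ∉
              (univ.filter fun w : ({v : V // v ∉ S} ⊕ (↥S × Fin P)) =>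
                Sum.elim (fun u => u.1 ∈ A) (fun p => p.1.1 ∈ A) w)).card : NNReal))
            * c u.1 v.1
        else 0)
      = ∑ u : {x : V // x ∉ S}, ∑ v : ↥S,
        if u.1 ∈ A ∧ v.1 ∉ A then
          (fun u v => if u ∈ S ∨ v ∈ S then (P : NNReal) * (c u v + cs u v) else c u v) u.1 v.1
        else 0 := by
    refine Finset.sum_congr rfl fun u _ => Finset.sum_congr rfl fun v _ => ?_
    have hcs0 : cs u.1 v.1 = 0 := hcs _ _ fun hh => u.2 hh.1
    by_cases hv : v.1 ∈ A
    · simp [Finset.mem_filter, hv]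
    · by_cases hu : u.1 ∈ A
      · simp [Finset.mem_filter, hv, hu, v.2, hcs0]
      · simp [Finset.mem_filter, hu]
  have e3 : (∑ u : ↥S, ∑ v : {v : V // v ∉ S},
        if Sum.inl v ∉ (univ.filter fun w : ({v : V // v ∉ S} ⊕ (↥S × Fin P)) =>
              Sum.elim (fun u => u.1 ∈ A) (fun p => p.1.1 ∈ A) w) then
          (((univ.filter fun i => Sum.inr (u, i) ∈
              (univ.filter fun w : ({v : V // v ∉ S} ⊕ (↥S × Fin P)) =>
                Sum.elim (fun u => u.1 ∈ A) (fun p => p.1.1 ∈ A) w)).card : NNReal))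
            * c u.1 v.1
        else 0)
      = ∑ u : ↥S, ∑ v : {x : V // x ∉ S},
        if u.1 ∈ A ∧ v.1 ∉ A then
          (fun u v => if u ∈ S ∨ v ∈ S then (P : NNReal) * (c u v + cs u v) else c u v) u.1 v.1
        else 0 := by
    refine Finset.sum_congr rfl fun u _ => Finset.sum_congr rfl fun v _ => ?_
    have hcs0 : cs u.1 v.1 = 0 := hcs _ _ fun hh => v.2 hh.2
    by_cases hv : v.1 ∈ A
    · simp [Finset.mem_filter, hv]
    · by_cases hu : u.1 ∈ A
      · simp [Finset.mem_filter, hv, hu, u.2, hcs0]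
      · simp [Finset.mem_filter, hv, hu]
  have e4 : (∑ u : ↥S, ∑ v : ↥S,
        ((((univ.filter fun i => Sum.inr (u, i) ∈
              (univ.filter fun w : ({v : V // v ∉ S} ⊕ (↥S × Fin P)) =>
                Sum.elim (fun u => u.1 ∈ A) (fun p => p.1.1 ∈ A) w)
            ∧ Sum.inr (v, i) ∉
              (univ.filter fun w : ({v : V // v ∉ S} ⊕ (↥S × Fin P)) =>
                Sum.elim (fun u => u.1 ∈ A) (fun p => p.1.1 ∈ A) w)).card : NNReal))
            * c u.1 v.1
          + (((univ.filter fun i => Sum.inr (u, i) ∈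
              (univ.filter fun w : ({v : V // v ∉ S} ⊕ (↥S × Fin P)) =>
                Sum.elim (fun u => u.1 ∈ A) (fun p => p.1.1 ∈ A) w)
            ∧ Sum.inr (v, σ u v i) ∉
              (univ.filter fun w : ({v : V // v ∉ S} ⊕ (↥S × Fin P)) =>
                Sum.elim (fun u => u.1 ∈ A) (fun p => p.1.1 ∈ A) w)).card : NNReal))
            * cs u.1 v.1))
      = ∑ u : ↥S, ∑ v : ↥S,
        if u.1 ∈ A ∧ v.1 ∉ A then
          (fun u v => if u ∈ S ∨ v ∈ S then (P : NNReal) * (c u v + cs u v) else c u v) u.1 v.1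
        else 0 := by
    refine Finset.sum_congr rfl fun u _ => Finset.sum_congr rfl fun v _ => ?_
    by_cases hu : u.1 ∈ A
    · by_cases hv : v.1 ∈ A
      · simp [Finset.mem_filter, hu, hv]
      · simp [Finset.mem_filter, hu, hv, u.2, mul_add]
    · simp [Finset.mem_filter, hu]
  rw [e1, e2, e3, e4]
  ring

lemma sum_comm3 {α β : Type*} [Fintype α] [Fintype β] (s : Finset ℕ) (f : ℕ → α → β → NNReal) :
    ∑ k ∈ s, ∑ u : α, ∑ v : β, f k u v = ∑ u : α, ∑ v : β, ∑ k ∈ s, f k u v := by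
  rw [Finset.sum_comm]
  exact Finset.sum_congr rfl fun u _ => Finset.sum_comm

lemma rep_to_cut {V : Type*} [Fintype V] (c cs : V → V → NNReal) (S : Set V) (P : ℕ)
    (hP : 1 ≤ P) (σ : ↥S → ↥S → (Fin P ≃ Fin P))
    (hcs : ∀ u v, ¬(u ∈ S ∧ v ∈ S) → cs u v = 0)
    (B : Finset ({v : V // v ∉ S} ⊕ (↥S × Fin P))) :
    ∃ A : Finset V, (∀ (v : V) (h : v ∉ S), (v ∈ A ↔ Sum.inl ⟨v, h⟩ ∈ B)) ∧
      cutValue (fun u v => if u ∈ S ∨ v ∈ S then (P : NNReal) * (c u v + cs u v) else c u v) A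
        ≤ cutValue (sibRepCap c cs S P σ) B := by
  classical
  -- the number of copies of `u` inside `B`
  let n : ↥S → ℕ := fun u => (univ.filter fun i => Sum.inr (u, i) ∈ B).card
  -- the threshold cuts
  let Ak : ℕ → Finset V := fun k =>
    univ.filter fun v => if h : v ∈ S then k < n ⟨v, h⟩ else Sum.inl ⟨v, h⟩ ∈ B
  have hmemS : ∀ (k : ℕ) (u : ↥S), u.1 ∈ Ak k ↔ k < n u := by
    intro k u
    simp [Ak, u.2]
  have hmemNS : ∀ (k : ℕ) (u : {x : V // x ∉ S}), u.1 ∈ Ak k ↔ Sum.inl u ∈ B := by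
    intro k u
    simp [Ak, u.2]
  have hnP : ∀ u : ↥S, n u ≤ P := by
    intro u
    simpa using Finset.card_filter_le univ (fun i => Sum.inr (u, i) ∈ B)
  have hcard_lt : ∀ u : ↥S, ((range P).filter fun k => k < n u).card = n u := by
    intro u
    have h := hnP u
    have : (range P).filter (fun k => k < n u) = range (n u) := by
      ext k
      simp only [Finset.mem_filter, Finset.mem_range]
      omega
    rw [this, Finset.card_range]
  have hcard_between : ∀ u v : ↥S,
      ((range P).filter fun k => k < n u ∧ ¬ k < n v).card = n u - n v := by
    intro u v
    have h := hnP u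
    have : ((range P).filter fun k => k < n u ∧ ¬ k < n v) = Finset.Ico (n v) (n u) := by
      ext k
      simp only [Finset.mem_filter, Finset.mem_range, Finset.mem_Ico]
      omega
    rw [this, Nat.card_Ico]
  have hcard_ge : ∀ v : ↥S, ((range P).filter fun k => ¬ k < n v).card = P - n v := by
    intro v
    have : ((range P).filter fun k => ¬ k < n v) = Finset.Ico (n v) P := by
      ext k
      simp only [Finset.mem_filter, Finset.mem_range, Finset.mem_Ico]
      omega
    rw [this, Nat.card_Ico]
  have hcard_notB : ∀ v : ↥S,
      (univ.filter fun j : Fin P => Sum.inr (v, j) ∉ B).card = P - n v := by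
    intro v
    have h := Finset.card_filter_add_card_filter_not
      (s := (univ : Finset (Fin P))) (p := fun i => Sum.inr (v, i) ∈ B)
    simp only [Finset.card_univ, Fintype.card_fin] at h
    have hnv : n v = (univ.filter fun i : Fin P => Sum.inr (v, i) ∈ B).card := rfl
    omega
  have hNbound : ∀ u v : ↥S,
      n u ≤ n v + (univ.filter fun i => Sum.inr (u, i) ∈ B ∧ Sum.inr (v, i) ∉ B).card := by
    intro u v
    have h1 : (univ.filter fun i => Sum.inr (u, i) ∈ B ∧ Sum.inr (v, i) ∈ B).card ≤ n v := by
      refine Finset.card_le_card ?_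
      intro i hi
      simp only [Finset.mem_filter] at hi ⊢
      exact ⟨hi.1, hi.2.2⟩
    have h2 : n u = (univ.filter fun i => Sum.inr (u, i) ∈ B ∧ Sum.inr (v, i) ∈ B).card
        + (univ.filter fun i => Sum.inr (u, i) ∈ B ∧ Sum.inr (v, i) ∉ B).card := by
      have h := Finset.card_filter_add_card_filter_not
        (s := univ.filter fun i : Fin P => Sum.inr (u, i) ∈ B)
        (p := fun i => Sum.inr (v, i) ∈ B)
      rw [Finset.filter_filter, Finset.filter_filter] at h
      exact h.symm
    omega
  have hMbound : ∀ u v : ↥S,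
      n u ≤ n v + (univ.filter fun i => Sum.inr (u, i) ∈ B ∧ Sum.inr (v, σ u v i) ∉ B).card := by
    intro u v
    have hperm : (univ.filter fun i : Fin P => Sum.inr (v, σ u v i) ∈ B).card = n v := by
      refine Finset.card_equiv (σ u v) ?_
      intro i
      simp
    have h1 : (univ.filter fun i => Sum.inr (u, i) ∈ B ∧ Sum.inr (v, σ u v i) ∈ B).card
        ≤ n v := by
      rw [← hperm]
      refine Finset.card_le_card ?_
      intro i hi
      simp only [Finset.mem_filter] at hi ⊢
      exact ⟨hi.1, hi.2.2⟩
    have h2 : n u = (univ.filter fun i => Sum.inr (u, i) ∈ B ∧ Sum.inr (v, σ u v i) ∈ B).card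
        + (univ.filter fun i => Sum.inr (u, i) ∈ B ∧ Sum.inr (v, σ u v i) ∉ B).card := by
      have h := Finset.card_filter_add_card_filter_not
        (s := univ.filter fun i : Fin P => Sum.inr (u, i) ∈ B)
        (p := fun i => Sum.inr (v, σ u v i) ∈ B)
      rw [Finset.filter_filter, Finset.filter_filter] at h
      exact h.symm
    omega
  -- evaluation of the cut value of `Ak k`
  have L2 : ∀ k : ℕ, cutValue
      (fun u v => if u ∈ S ∨ v ∈ S then (P : NNReal) * (c u v + cs u v) else c u v) (Ak k) =
      ((∑ u : ↥S, ∑ v : ↥S,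
          if k < n u ∧ ¬ k < n v then (P : NNReal) * (c u.1 v.1 + cs u.1 v.1) else 0)
      + ∑ u : ↥S, ∑ v : {x : V // x ∉ S},
          if k < n u ∧ Sum.inl v ∉ B then (P : NNReal) * c u.1 v.1 else 0)
      + ((∑ u : {x : V // x ∉ S}, ∑ v : ↥S,
          if Sum.inl u ∈ B ∧ ¬ k < n v then (P : NNReal) * c u.1 v.1 else 0)
      + ∑ u : {x : V // x ∉ S}, ∑ v : {x : V // x ∉ S},
          if Sum.inl u ∈ B ∧ Sum.inl v ∉ B then c u.1 v.1 else 0) := by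
    intro k
    rw [cut_V_decomp S]
    congr 1
    · congr 1
      · refine Finset.sum_congr rfl fun u _ => Finset.sum_congr rfl fun v _ => ?_
        simp only [hmemS, hmemNS]
        simp [u.2]
      · refine Finset.sum_congr rfl fun u _ => Finset.sum_congr rfl fun v _ => ?_
        simp only [hmemS, hmemNS]
        have hcs0 : cs u.1 v.1 = 0 := hcs _ _ fun hh => v.2 hh.2
        simp [u.2, hcs0]
    · congr 1
      · refine Finset.sum_congr rfl fun u _ => Finset.sum_congr rfl fun v _ => ?_
        simp only [hmemS, hmemNS]
        have hcs0 : cs u.1 v.1 = 0 := hcs _ _ fun hh => u.2 hh.1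
        simp [v.2, hcs0]
      · refine Finset.sum_congr rfl fun u _ => Finset.sum_congr rfl fun v _ => ?_
        simp only [hmemS, hmemNS]
        simp [u.2, v.2]
  -- the four quadrant bounds for the sum over k
  have hQ1 : (∑ k ∈ range P, ∑ u : ↥S, ∑ v : ↥S,
        if k < n u ∧ ¬ k < n v then (P : NNReal) * (c u.1 v.1 + cs u.1 v.1) else 0)
      ≤ (P : NNReal) * ∑ u : ↥S, ∑ v : ↥S,
        (((univ.filter fun i => Sum.inr (u, i) ∈ B ∧ Sum.inr (v, i) ∉ B).card : NNReal)
            * c u.1 v.1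
          + ((univ.filter fun i =>
              Sum.inr (u, i) ∈ B ∧ Sum.inr (v, σ u v i) ∉ B).card : NNReal)
            * cs u.1 v.1) := by
    rw [sum_comm3, Finset.mul_sum]
    refine Finset.sum_le_sum fun u _ => ?_
    rw [Finset.mul_sum]
    refine Finset.sum_le_sum fun v _ => ?_
    rw [sum_ite_card, hcard_between u v]
    have hN : n u - n v ≤ (univ.filter fun i =>
        Sum.inr (u, i) ∈ B ∧ Sum.inr (v, i) ∉ B).card := by
      have := hNbound u v
      omega
    have hM : n u - n v ≤ (univ.filter fun i =>
        Sum.inr (u, i) ∈ B ∧ Sum.inr (v, σ u v i) ∉ B).card := by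
      have := hMbound u v
      omega
    calc ((n u - n v : ℕ) : NNReal) * ((P : NNReal) * (c u.1 v.1 + cs u.1 v.1))
        = (P : NNReal) * (((n u - n v : ℕ) : NNReal) * c u.1 v.1
            + ((n u - n v : ℕ) : NNReal) * cs u.1 v.1) := by ring
      _ ≤ (P : NNReal) * (((univ.filter fun i =>
              Sum.inr (u, i) ∈ B ∧ Sum.inr (v, i) ∉ B).card : NNReal) * c u.1 v.1
            + ((univ.filter fun i =>
              Sum.inr (u, i) ∈ B ∧ Sum.inr (v, σ u v i) ∉ B).card : NNReal) * cs u.1 v.1) := by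
          refine mul_le_mul_right (add_le_add ?_ ?_) _
          · exact mul_le_mul_left (by exact_mod_cast hN) _
          · exact mul_le_mul_left (by exact_mod_cast hM) _
  have hQ2 : (∑ k ∈ range P, ∑ u : ↥S, ∑ v : {x : V // x ∉ S},
        if k < n u ∧ Sum.inl v ∉ B then (P : NNReal) * c u.1 v.1 else 0)
      = (P : NNReal) * ∑ u : ↥S, ∑ v : {x : V // x ∉ S},
        if Sum.inl v ∉ B then ((n u : ℕ) : NNReal) * c u.1 v.1 else 0 := by
    rw [sum_comm3, Finset.mul_sum]
    refine Finset.sum_congr rfl fun u _ => ?_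
    rw [Finset.mul_sum]
    refine Finset.sum_congr rfl fun v _ => ?_
    by_cases hb : Sum.inl v ∈ B
    · simp [hb]
    · simp only [hb, not_false_iff, and_true, if_true]
      rw [sum_ite_card, hcard_lt u]
      ring
  have hQ3 : (∑ k ∈ range P, ∑ u : {x : V // x ∉ S}, ∑ v : ↥S,
        if Sum.inl u ∈ B ∧ ¬ k < n v then (P : NNReal) * c u.1 v.1 else 0)
      = (P : NNReal) * ∑ u : {x : V // x ∉ S}, ∑ v : ↥S,
        if Sum.inl u ∈ B then
          ((univ.filter fun j => Sum.inr (v, j) ∉ B).card : NNReal) * c u.1 v.1 else 0 := by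
    rw [sum_comm3, Finset.mul_sum]
    refine Finset.sum_congr rfl fun u _ => ?_
    rw [Finset.mul_sum]
    refine Finset.sum_congr rfl fun v _ => ?_
    by_cases hb : Sum.inl u ∈ B
    · simp only [hb, true_and, if_true]
      rw [sum_ite_card, hcard_ge v, hcard_notB v]
      ring
    · simp [hb]
  have hQ4 : (∑ k ∈ range P, ∑ u : {x : V // x ∉ S}, ∑ v : {x : V // x ∉ S},
        if Sum.inl u ∈ B ∧ Sum.inl v ∉ B then c u.1 v.1 else 0)
      = (P : NNReal) * ∑ u : {x : V // x ∉ S}, ∑ v : {x : V // x ∉ S},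
        if Sum.inl u ∈ B ∧ Sum.inl v ∉ B then c u.1 v.1 else 0 := by
    rw [Finset.sum_const, Finset.card_range, nsmul_eq_mul]
  -- the key inequality
  have key : (∑ k ∈ range P, cutValue
      (fun u v => if u ∈ S ∨ v ∈ S then (P : NNReal) * (c u v + cs u v) else c u v) (Ak k))
      ≤ ∑ k ∈ range P, cutValue (sibRepCap c cs S P σ) B := by
    calc (∑ k ∈ range P, cutValue
        (fun u v => if u ∈ S ∨ v ∈ S then (P : NNReal) * (c u v + cs u v) else c u v) (Ak k))
        = (∑ k ∈ range P, ∑ u : ↥S, ∑ v : ↥S,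
            if k < n u ∧ ¬ k < n v then (P : NNReal) * (c u.1 v.1 + cs u.1 v.1) else 0)
          + (∑ k ∈ range P, ∑ u : ↥S, ∑ v : {x : V // x ∉ S},
            if k < n u ∧ Sum.inl v ∉ B then (P : NNReal) * c u.1 v.1 else 0)
          + ((∑ k ∈ range P, ∑ u : {x : V // x ∉ S}, ∑ v : ↥S,
            if Sum.inl u ∈ B ∧ ¬ k < n v then (P : NNReal) * c u.1 v.1 else 0)
          + (∑ k ∈ range P, ∑ u : {x : V // x ∉ S}, ∑ v : {x : V // x ∉ S},
            if Sum.inl u ∈ B ∧ Sum.inl v ∉ B then c u.1 v.1 else 0)) := by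
          rw [← Finset.sum_add_distrib, ← Finset.sum_add_distrib, ← Finset.sum_add_distrib]
          exact Finset.sum_congr rfl fun k _ => L2 k
      _ ≤ ((P : NNReal) * ∑ u : ↥S, ∑ v : ↥S,
            (((univ.filter fun i => Sum.inr (u, i) ∈ B ∧ Sum.inr (v, i) ∉ B).card : NNReal)
                * c u.1 v.1
              + ((univ.filter fun i =>
                  Sum.inr (u, i) ∈ B ∧ Sum.inr (v, σ u v i) ∉ B).card : NNReal)
                * cs u.1 v.1))
          + ((P : NNReal) * ∑ u : ↥S, ∑ v : {x : V // x ∉ S},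
            if Sum.inl v ∉ B then ((n u : ℕ) : NNReal) * c u.1 v.1 else 0)
          + (((P : NNReal) * ∑ u : {x : V // x ∉ S}, ∑ v : ↥S,
            if Sum.inl u ∈ B then
              ((univ.filter fun j => Sum.inr (v, j) ∉ B).card : NNReal) * c u.1 v.1 else 0)
          + ((P : NNReal) * ∑ u : {x : V // x ∉ S}, ∑ v : {x : V // x ∉ S},
            if Sum.inl u ∈ B ∧ Sum.inl v ∉ B then c u.1 v.1 else 0)) := by
          exact add_le_add (add_le_add hQ1 hQ2.le) (add_le_add hQ3.le hQ4.le)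
      _ = ∑ k ∈ range P, cutValue (sibRepCap c cs S P σ) B := by
          rw [Finset.sum_const, Finset.card_range, nsmul_eq_mul, cut_rep_decomp]
          ring
  have hPne : (range P).Nonempty := by
    rw [Finset.nonempty_range_iff]
    omega
  obtain ⟨k, -, hk⟩ := Finset.exists_le_of_sum_le hPne key
  refine ⟨Ak k, ?_, hk⟩
  intro v hv
  exact hmemNS k ⟨v, hv⟩

theorem minCut_sibRep_eq_minCut_reweight {V : Type*} [Fintype V]
    (c cs : V → V → NNReal) (S : Set V) (P : ℕ) (hP : 1 ≤ P)
    (σ : ↥S → ↥S → (Fin P ≃ Fin P))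
    (s t : V) (hst : s ≠ t) (hs : s ∉ S) (ht : t ∉ S)
    (hcs : ∀ u v, ¬(u ∈ S ∧ v ∈ S) → cs u v = 0) :
    minCutValue (sibRepCap c cs S P σ) (Sum.inl ⟨s, hs⟩) (Sum.inl ⟨t, ht⟩) =
      minCutValue
        (fun u v => if u ∈ S ∨ v ∈ S then (P : NNReal) * (c u v + cs u v) else c u v)
        s t := by
  classical
  apply le_antisymm
  · obtain ⟨A, hsA, htA, hA⟩ := minCut_attained
      (fun u v => if u ∈ S ∨ v ∈ S then (P : NNReal) * (c u v + cs u v) else c u v) s t hst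
    have h := cut_to_rep c cs S P σ hcs A
    refine le_trans (minCut_le _ _ _
      (univ.filter fun w => Sum.elim (fun u => u.1 ∈ A) (fun p => p.1.1 ∈ A) w) ?_ ?_) ?_
    · simp [hsA]
    · simp [htA]
    · rw [h, hA]
  · obtain ⟨B, hsB, htB, hB⟩ := minCut_attained (sibRepCap c cs S P σ)
      (Sum.inl ⟨s, hs⟩) (Sum.inl ⟨t, ht⟩) (by simp [hst])
    obtain ⟨A, hmem, hle⟩ := rep_to_cut c cs S P hP σ hcs B
    refine le_trans (minCut_le _ s t A ((hmem s hs).2 hsB)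
      (fun hta => htB ((hmem t ht).1 hta))) ?_
    exact le_trans hle hB.le

end
end
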